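/- arXiv:1908.11070 — 3 statements merged into one kernel-verified Lean document; each statement's English description precedes it below -/
import Mathlib

section
/- For every natural number k and real θ, if X ~ N(θ,1), then E[H_k(X)^2] ≤ (k + θ^2)^k, where H_k is the k-th probabilist's Hermite polynomial. -/
open MeasureTheory ProbabilityTheory Polynomial

/-! Gaussian integration by parts, `E[(X - μ) p(X)] = v E[p'(X)]` for `X ~ N(μ, v)`, together
with `H_{n+1} = X H_n - H_n'` gives `E[p(X) H_n(X)] = E[((D + μ)^n p)(X)]` for `X ~ N(μ, 1)`,
where `D` is differentiation. As `D^j H_k = k(k-1)⋯(k-j+1) H_{k-j}` and `E[H_m(X)] = μ^m`,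
expanding `(D + μ)^k` binomially gives `E[H_k(X)^2] = ∑_j C(k,j) k(k-1)⋯(k-j+1) μ^{2(k-j)}`,
and `k(k-1)⋯(k-j+1) ≤ k^j` bounds this by `(k + μ^2)^k`. -/

namespace Polynomial

theorem derivative_hermite_succ (n : ℕ) :
    derivative (hermite (n + 1)) = (n + 1) • hermite n := by
  induction n with
  | zero => simp
  | succ n ih =>
    rw [hermite_succ (n + 1), derivative_sub, derivative_mul, derivative_X, one_mul, ih,
      derivative_smul, mul_smul_comm, add_sub_assoc, ← smul_sub, ← hermite_succ,
      succ_nsmul' _ (n + 1)]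

theorem derivative_hermite (n : ℕ) : derivative (hermite n) = n • hermite (n - 1) := by
  cases n with
  | zero => simp
  | succ n => exact derivative_hermite_succ n

theorem iterate_derivative_hermite (n j : ℕ) :
    derivative^[j] (hermite n) = n.descFactorial j • hermite (n - j) := by
  induction j with
  | zero => simp
  | succ j ih =>
    rw [Function.iterate_succ_apply', ih, derivative_smul, derivative_hermite, smul_smul,
      Nat.descFactorial_succ, mul_comm, Nat.sub_sub]

end Polynomial

namespace ProbabilityTheory

section GaussianIntegrationByParts

variable {μ : ℝ} {v : NNReal}

theorem hasDerivAt_gaussianPDFReal (hv : v ≠ 0) (x : ℝ) :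
    HasDerivAt (gaussianPDFReal μ v) (-(x - μ) / v * gaussianPDFReal μ v x) x := by
  have hv' : (v : ℝ) ≠ 0 := by exact_mod_cast hv
  have hexponent : HasDerivAt (fun y ↦ -(y - μ) ^ 2 / (2 * v)) (-(x - μ) / v) x := by
    refine ((((hasDerivAt_id' x).sub_const μ).fun_pow 2).fun_neg.div_const
      (2 * (v : ℝ))).congr_deriv ?_
    field_simp
    ring
  rw [gaussianPDFReal_def]
  exact (hexponent.exp.const_mul _).congr_deriv (by ring)

theorem integrable_eval_gaussianReal (p : ℝ[X]) :
    Integrable (fun x ↦ p.eval x) (gaussianReal μ v) := by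
  simp_rw [eval_eq_sum_range]
  refine integrable_finsetSum _ fun i _ ↦ ?_
  exact (integrable_pow_of_mem_interior_integrableExpSet (X := id)
    (by simp [integrableExpSet_id_gaussianReal]) i).const_mul _

theorem integrable_gaussianPDFReal_mul_eval (hv : v ≠ 0) (p : ℝ[X]) :
    Integrable (fun x ↦ gaussianPDFReal μ v x * p.eval x) := by
  have h := integrable_eval_gaussianReal (μ := μ) (v := v) p
  rw [gaussianReal_of_var_ne_zero _ hv, integrable_withDensity_iff_integrable_smul'
    (measurable_gaussianPDF μ v) (ae_of_all _ fun _ ↦ gaussianPDF_lt_top)] at h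
  simpa [toReal_gaussianPDF] using h

variable (μ v) in
noncomputable def gaussianRealExpectation : ℝ[X] →ₗ[ℝ] ℝ where
  toFun p := ∫ x, p.eval x ∂gaussianReal μ v
  map_add' p q := by
    simp only [eval_add]
    exact integral_add (integrable_eval_gaussianReal p) (integrable_eval_gaussianReal q)
  map_smul' c p := by simp [integral_const_mul]

theorem gaussianRealExpectation_apply (p : ℝ[X]) :
    gaussianRealExpectation μ v p = ∫ x, p.eval x ∂gaussianReal μ v := rfl

theorem gaussianRealExpectation_one : gaussianRealExpectation μ v 1 = 1 := by
  simp [gaussianRealExpectation_apply]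

theorem gaussianRealExpectation_X_sub_C_mul (p : ℝ[X]) :
    gaussianRealExpectation μ v ((X - C μ) * p) =
      v * gaussianRealExpectation μ v (derivative p) := by
  by_cases hv : v = 0
  · simp [gaussianRealExpectation_apply, hv, gaussianReal_zero_var]
  have hv' : (v : ℝ) ≠ 0 := by exact_mod_cast hv
  set φ := gaussianPDFReal μ v
  have hderiv : ∀ x, HasDerivAt (fun x ↦ v * (φ x * p.eval x))
      (v * (φ x * (derivative p).eval x) - φ x * ((X - C μ) * p).eval x) x := fun x ↦
    (((hasDerivAt_gaussianPDFReal hv x).mul (p.hasDerivAt x)).const_mul (v : ℝ)).congr_deriv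
      (by simp only [eval_mul, eval_sub, eval_X, eval_C]; field_simp; ring)
  have hint (q : ℝ[X]) := integrable_gaussianPDFReal_mul_eval (μ := μ) hv q
  have hFTC := integral_eq_zero_of_hasDerivAt_of_integrable hderiv
    (((hint _).const_mul _).sub (hint _)) ((hint p).const_mul _)
  rw [integral_sub ((hint _).const_mul _) (hint _), sub_eq_zero] at hFTC
  simp only [gaussianRealExpectation_apply, integral_gaussianReal_eq_integral_smul hv,
    smul_eq_mul, ← integral_const_mul]
  exact hFTC.symm

end GaussianIntegrationByParts

section HermiteMoments

variable (μ : ℝ)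

theorem gaussianRealExpectation_mul_hermite_succ (p : ℝ[X]) (n : ℕ) :
    gaussianRealExpectation μ 1 (p * (hermite (n + 1)).map (algebraMap ℤ ℝ)) =
      gaussianRealExpectation μ 1
        ((derivative p + μ • p) * (hermite n).map (algebraMap ℤ ℝ)) := by
  set H := (hermite n).map (algebraMap ℤ ℝ)
  have hpoly : p * (hermite (n + 1)).map (algebraMap ℤ ℝ) =
      (X - C μ) * (p * H) - derivative (p * H) + (derivative p + μ • p) * H := by
    rw [hermite_succ, Polynomial.map_sub, Polynomial.map_mul, map_X, ← derivative_map,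
      derivative_mul, smul_eq_C_mul]
    ring
  rw [hpoly, map_add, map_sub, gaussianRealExpectation_X_sub_C_mul, NNReal.coe_one, one_mul,
    sub_self, zero_add]

theorem gaussianRealExpectation_mul_hermite (p : ℝ[X]) (n : ℕ) :
    gaussianRealExpectation μ 1 (p * (hermite n).map (algebraMap ℤ ℝ)) =
      gaussianRealExpectation μ 1 (((derivative + μ • 1 : Module.End ℝ ℝ[X]) ^ n) p) := by
  induction n generalizing p with
  | zero => simp [hermite_zero]
  | succ n ih =>
    rw [gaussianRealExpectation_mul_hermite_succ, ih, pow_succ, Module.End.mul_apply]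
    rfl

theorem gaussianRealExpectation_hermite (n : ℕ) :
    gaussianRealExpectation μ 1 ((hermite n).map (algebraMap ℤ ℝ)) = μ ^ n := by
  have h : ((derivative + μ • 1 : Module.End ℝ ℝ[X]) ^ n) 1 = μ ^ n • 1 := by
    induction n with
    | zero => simp
    | succ n ih => simp [pow_succ, Module.End.mul_apply, ih, smul_smul, mul_comm]
  rw [← one_mul ((hermite n).map _), gaussianRealExpectation_mul_hermite, h, map_smul,
    gaussianRealExpectation_one, smul_eq_mul, mul_one]

theorem gaussianRealExpectation_hermite_sq (k : ℕ) :
    gaussianRealExpectation μ 1 (((hermite k).map (algebraMap ℤ ℝ)) ^ 2) =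
      ∑ j ∈ Finset.range (k + 1), (k.choose j * k.descFactorial j : ℝ) * (μ ^ 2) ^ (k - j) := by
  have hcomm : Commute (derivative : Module.End ℝ ℝ[X]) (μ • 1) :=
    (Commute.one_right _).smul_right μ
  rw [sq, gaussianRealExpectation_mul_hermite, hcomm.add_pow, LinearMap.sum_apply, map_sum]
  refine Finset.sum_congr rfl fun j _ ↦ ?_
  rw [Module.End.mul_apply, Module.End.mul_apply, Module.End.natCast_apply, _root_.smul_pow,
    one_pow, LinearMap.smul_apply, Module.End.one_apply, map_smul, map_nsmul,
    Module.End.pow_apply, iterate_derivative_map, iterate_derivative_hermite, ← coe_mapRingHom,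
    map_nsmul, coe_mapRingHom, map_smul, map_nsmul, map_nsmul, gaussianRealExpectation_hermite]
  simp only [nsmul_eq_mul, smul_eq_mul]
  ring

end HermiteMoments

end ProbabilityTheory

/-- For every natural `k` and real `θ`, if `X ~ N(θ,1)` then
`E[H_k(X)^2] ≤ (k + θ^2)^k` for the probabilist's Hermite polynomial `H_k`. -/
theorem hermite_sq_expectation_le (k : ℕ) (θ : ℝ) :
    ∫ x, ((Polynomial.aeval x (Polynomial.hermite k) : ℝ)) ^ 2 ∂(gaussianReal θ 1)
      ≤ ((k : ℝ) + θ ^ 2) ^ k := by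
  have hexpectation : ∫ x, (aeval x (hermite k) : ℝ) ^ 2 ∂(gaussianReal θ 1) =
      gaussianRealExpectation θ 1 (((hermite k).map (algebraMap ℤ ℝ)) ^ 2) := by
    simp only [gaussianRealExpectation_apply, eval_pow, eval_map_algebraMap]
  rw [hexpectation, gaussianRealExpectation_hermite_sq, add_pow]
  refine Finset.sum_le_sum fun j _ ↦ ?_
  have hdesc : (k.descFactorial j : ℝ) ≤ (k : ℝ) ^ j := by
    exact_mod_cast Nat.descFactorial_le_pow k j
  calc (k.choose j * k.descFactorial j : ℝ) * (θ ^ 2) ^ (k - j)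
      = k.descFactorial j * ((θ ^ 2) ^ (k - j) * k.choose j) := by ring
    _ ≤ (k : ℝ) ^ j * ((θ ^ 2) ^ (k - j) * k.choose j) := by gcongr
    _ = (k : ℝ) ^ j * (θ ^ 2) ^ (k - j) * k.choose j := by ring
end

section
/- Let F be continuous on [-M, M] with M > 0, let K be a positive integer, and suppose the best uniform polynomial approximation error δ_{K,M} = inf_{P ∈ P_K} ||F - P||_{∞,[-M,M]} is strictly positive. Then there exist probability measures ν₀, ν₁ on [-M, M] such that ∫ t^l dν₀(t) = ∫ t^l dν₁(t) for all l = 0, ..., K, and ∫ F dν₀ - ∫ F dν₁ = 2 δ_{K,M}. -/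
/-! Put `c t = ((t ^ l)_{l ≤ K}, F t)`. If `(0, 2δ)` were outside the compact convex hull of
`c '' [-M, M] - c '' [-M, M]`, a separating functional would give a polynomial `P` of degree
`≤ K` such that `F - P` oscillates by less than `2δ` on `[-M, M]`, and `P` shifted by a constant
would approximate `F` better than `δ`. A convex combination `∑ wᵢ (c xᵢ - c yᵢ) = (0, 2δ)` then
yields `ν₀ = ∑ wᵢ δ_{xᵢ}` and `ν₁ = ∑ wᵢ δ_{yᵢ}`. -/

open MeasureTheory Set Pointwise Polynomial

theorem convexHull_eq_image_stdSimplex_prod_pi {𝕜 E : Type*} [Field 𝕜] [LinearOrder 𝕜]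
    [IsStrictOrderedRing 𝕜] [AddCommGroup E] [Module 𝕜 E] [FiniteDimensional 𝕜 E] {s : Set E}
    (hs : s.Nonempty) :
    convexHull 𝕜 s =
      (fun q : (Fin (Module.finrank 𝕜 E + 1) → 𝕜) × (Fin (Module.finrank 𝕜 E + 1) → E) =>
        ∑ i, q.1 i • q.2 i) '' (stdSimplex 𝕜 _ ×ˢ univ.pi fun _ => s) := by
  refine Subset.antisymm ?_ ?_
  · intro x hx
    -- Carathéodory bounds the number of points by `finrank + 1`; pad with zero weights.
    obtain ⟨ι, _, z, w, hzs, hz, hw₀, hw₁, rfl⟩ := eq_pos_convex_span_of_mem_convexHull hx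
    have hcard : Fintype.card ι ≤ Fintype.card (Fin (Module.finrank 𝕜 E + 1)) := by
      simpa using hz.card_le_finrank_succ.trans (Nat.succ_le_succ (Submodule.finrank_le _))
    obtain ⟨e⟩ := Function.Embedding.nonempty_iff_card_le.2 hcard
    obtain ⟨x₀, hx₀⟩ := hs
    have hw : ∀ j ∉ range e, Function.extend e w 0 j = 0 :=
      fun j hj => Function.extend_apply' _ _ _ hj
    refine ⟨(Function.extend e w 0, Function.extend e z fun _ => x₀),
      ⟨⟨fun j => ?_, ?_⟩, fun j _ => ?_⟩, ?_⟩
    · by_cases hj : j ∈ range e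
      · obtain ⟨i, rfl⟩ := hj
        simpa [e.injective.extend_apply] using (hw₀ i).le
      · simp [hw j hj]
    · rw [← hw₁]
      exact (Fintype.sum_of_injective e e.injective _ _ hw
        fun i => (e.injective.extend_apply ..).symm).symm
    · by_cases hj : j ∈ range e
      · obtain ⟨i, rfl⟩ := hj
        simpa [e.injective.extend_apply] using hzs (mem_range_self i)
      · simpa [Function.extend_apply' _ _ _ hj] using hx₀
    · refine (Fintype.sum_of_injective e e.injective _ _ (fun j hj => ?_) fun i => ?_).symm
      · simp [hw j hj]
      · simp [e.injective.extend_apply]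
  · rintro _ ⟨⟨w, z⟩, ⟨hw, hz⟩, rfl⟩
    exact (convex_convexHull 𝕜 s).sum_mem (fun i _ => hw.1 i) hw.2
      fun i _ => subset_convexHull 𝕜 s (hz i trivial)

theorem IsCompact.convexHull {E : Type*} [TopologicalSpace E] [AddCommGroup E]
    [ContinuousAdd E] [Module ℝ E] [ContinuousSMul ℝ E] [FiniteDimensional ℝ E]
    {s : Set E} (hs : IsCompact s) : IsCompact (convexHull ℝ s) := by
  rcases s.eq_empty_or_nonempty with rfl | hne
  · simp
  rw [convexHull_eq_image_stdSimplex_prod_pi hne]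
  refine ((isCompact_stdSimplex ℝ _).prod (isCompact_univ_pi fun _ => hs)).image ?_
  fun_prop

section DiracMixture

variable {X ι : Type*} [MeasurableSpace X] [Fintype ι] {w : ι → ℝ}

theorem isProbabilityMeasure_sum_smul_dirac (hw₀ : ∀ i, 0 ≤ w i) (hw₁ : ∑ i, w i = 1)
    (p : ι → X) : IsProbabilityMeasure (∑ i, ENNReal.ofReal (w i) • Measure.dirac (p i)) := by
  constructor
  simp [Measure.finsetSum_apply, ← ENNReal.ofReal_sum_of_nonneg fun i _ => hw₀ i, hw₁]

variable [MeasurableSingletonClass X]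

theorem sum_smul_dirac_apply_eq_zero (c : ι → ENNReal) {p : ι → X} {A : Set X}
    (hp : ∀ i, p i ∉ A) : (∑ i, c i • Measure.dirac (p i)) A = 0 := by
  simp [Measure.finsetSum_apply, Measure.dirac_apply, hp]

theorem integral_sum_smul_dirac {G : Type*} [NormedAddCommGroup G] [NormedSpace ℝ G]
    [CompleteSpace G] (hw₀ : ∀ i, 0 ≤ w i) (p : ι → X) (f : X → G) :
    ∫ x, f x ∂(∑ i, ENNReal.ofReal (w i) • Measure.dirac (p i)) = ∑ i, w i • f (p i) := by
  rw [integral_finsetSum_measure fun i _ =>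
    (integrable_dirac enorm_lt_top).smul_measure ENNReal.ofReal_ne_top]
  simp [integral_smul_measure, integral_dirac, ENNReal.toReal_ofReal (hw₀ _)]

end DiracMixture

theorem exists_isProbabilityMeasure_of_mem_convexHull_sub {X E : Type*} [MeasurableSpace X]
    [MeasurableSingletonClass X] [AddCommGroup E] [Module ℝ E] {s : Set X} {c : X → E} {v : E}
    (hv : v ∈ convexHull ℝ (c '' s - c '' s)) :
    ∃ ν₀ ν₁ : Measure X, IsProbabilityMeasure ν₀ ∧ IsProbabilityMeasure ν₁ ∧
      ν₀ sᶜ = 0 ∧ ν₁ sᶜ = 0 ∧ ∀ ℓ : E →ₗ[ℝ] ℝ, ∫ x, ℓ (c x) ∂ν₀ - ∫ x, ℓ (c x) ∂ν₁ = ℓ v := by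
  obtain ⟨ι, _, w, z, hw₀, hw₁, hz, rfl⟩ := mem_convexHull_iff_exists_fintype.1 hv
  have hpq : ∀ i, ∃ x ∈ s, ∃ y ∈ s, c x - c y = z i := fun i => by
    obtain ⟨_, ⟨x, hx, rfl⟩, _, ⟨y, hy, rfl⟩, h⟩ := hz i
    exact ⟨x, hx, y, hy, h⟩
  choose p hp q hq hpq using hpq
  refine ⟨_, _, isProbabilityMeasure_sum_smul_dirac hw₀ hw₁ p,
    isProbabilityMeasure_sum_smul_dirac hw₀ hw₁ q,
    sum_smul_dirac_apply_eq_zero _ fun i => not_not_intro (hp i),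
    sum_smul_dirac_apply_eq_zero _ fun i => not_not_intro (hq i), fun ℓ => ?_⟩
  rw [integral_sum_smul_dirac hw₀, integral_sum_smul_dirac hw₀, ← Finset.sum_sub_distrib, map_sum]
  refine Finset.sum_congr rfl fun i _ => ?_
  rw [← hpq i, map_smul, map_sub, smul_sub]

theorem mk_zero_mem_convexHull_sub_of_forall_exists_le {E : Type*} [NormedAddCommGroup E]
    [NormedSpace ℝ E] [FiniteDimensional ℝ E] {S : Set (E × ℝ)} (hS : IsCompact S) {a : ℝ}
    (ha : 0 < a) (h : ∀ ℓ : E →L[ℝ] ℝ, ∃ p ∈ S, ∃ q ∈ S, a ≤ (p.2 - ℓ p.1) - (q.2 - ℓ q.1)) :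
    ((0 : E), a) ∈ convexHull ℝ (S - S) := by
  by_contra hv
  have hSS : IsCompact (S - S) := by
    rw [← image2_sub, ← image_prod]
    exact (hS.prod hS).image continuous_sub
  obtain ⟨f, u, hfu, huv⟩ := geometric_hahn_banach_closed_point (convex_convexHull ℝ _)
    hSS.convexHull.isClosed hv
  set γ := f (0, 1)
  have hf : ∀ p : E × ℝ, f p = f (p.1, 0) + p.2 * γ := fun p => by
    rw [← smul_eq_mul, ← map_smul, ← map_add]
    simp
  obtain ⟨p, hp, q, hq, hpq⟩ := h (-γ⁻¹ • f.comp (ContinuousLinearMap.inl ℝ E ℝ))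
  have hu : 0 < u := by
    simpa using hfu 0 (subset_convexHull ℝ _ ⟨p, hp, p, hp, sub_self p⟩)
  have hfa : f (0, a) = a * γ := by simpa [Prod.mk_zero_zero] using hf (0, a)
  have hγ : 0 < γ := pos_of_mul_pos_right (hfa ▸ hu.trans huv) ha.le
  have hfpq : f (p - q) < u := hfu _ (subset_convexHull ℝ _ ⟨p, hp, q, hq, rfl⟩)
  have hapq : a * γ ≤ f (p - q) := by
    have := mul_le_mul_of_nonneg_right hpq hγ.le
    rw [map_sub, hf p, hf q]
    simp only [FunLike.coe_smul, Pi.smul_apply, ContinuousLinearMap.comp_apply,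
      ContinuousLinearMap.inl_apply, smul_eq_mul] at this
    field_simp at this
    linarith
  linarith

theorem exists_two_mul_le_sub_of_forall_le_iSup_abs_sub {X : Type*} [TopologicalSpace X]
    {s : Set X} (hs : IsCompact s) (hne : s.Nonempty) {h : X → ℝ} (hh : ContinuousOn h s)
    {δ : ℝ} (hδ : ∀ a : ℝ, δ ≤ ⨆ x : s, |h x - a|) : ∃ x ∈ s, ∃ y ∈ s, 2 * δ ≤ h x - h y := by
  obtain ⟨x, hx, hmax⟩ := hs.exists_isMaxOn hne hh
  obtain ⟨y, hy, hmin⟩ := hs.exists_isMinOn hne hh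
  refine ⟨x, hx, y, hy, ?_⟩
  have : Nonempty s := hne.to_subtype
  have hsup : ⨆ z : s, |h z - (h x + h y) / 2| ≤ (h x - h y) / 2 :=
    ciSup_le fun z => abs_le.2
      ⟨by linarith [isMinOn_iff.1 hmin z z.2], by linarith [isMaxOn_iff.1 hmax z z.2]⟩
  linarith [hδ ((h x + h y) / 2)]

theorem Polynomial.exists_natDegree_le_eval_eq {R : Type*} [CommRing R] {K : ℕ}
    (ℓ : (Fin (K + 1) → R) →ₗ[R] R) :
    ∃ P : R[X], P.natDegree ≤ K ∧ ∀ x, P.eval x = ℓ fun l => x ^ (l : ℕ) := by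
  classical
  refine ⟨∑ l : Fin (K + 1), C (ℓ fun j => if l = j then 1 else 0) * X ^ (l : ℕ),
    natDegree_sum_le_of_forall_le _ _ fun l _ =>
      (natDegree_C_mul_X_pow_le _ _).trans (Nat.lt_succ_iff.1 l.2), fun x => ?_⟩
  rw [ℓ.pi_apply_eq_sum_univ, eval_finsetSum]
  refine Finset.sum_congr rfl fun l _ => ?_
  rw [eval_mul, eval_C, eval_pow, eval_X, smul_eq_mul, mul_comm]

theorem exists_measures_matching_moments_general
    (F : ℝ → ℝ) (M : ℝ) (hM : 0 < M) (K : ℕ)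
    (hF : ContinuousOn F (Icc (-M) M)) (δ : ℝ)
    (hδ : δ = sInf {e : ℝ | ∃ P : Polynomial ℝ, P.natDegree ≤ K ∧
        e = ⨆ x : Icc (-M) M, |F (x : ℝ) - P.eval (x : ℝ)|})
    (hδpos : 0 < δ) :
    ∃ ν₀ ν₁ : Measure ℝ, IsProbabilityMeasure ν₀ ∧ IsProbabilityMeasure ν₁ ∧
      ν₀ (Icc (-M) M)ᶜ = 0 ∧ ν₁ (Icc (-M) M)ᶜ = 0 ∧
      (∀ l : ℕ, l ≤ K → ∫ t, t ^ l ∂ν₀ = ∫ t, t ^ l ∂ν₁) ∧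
      (∫ t, F t ∂ν₀) - (∫ t, F t ∂ν₁) = 2 * δ := by
  have hδ_le : ∀ P : ℝ[X], P.natDegree ≤ K →
      δ ≤ ⨆ x : Icc (-M) M, |F (x : ℝ) - P.eval (x : ℝ)| := by
    intro P hP
    refine hδ ▸ csInf_le ⟨0, ?_⟩ ⟨P, hP, rfl⟩
    rintro _ ⟨Q, -, rfl⟩
    exact Real.iSup_nonneg fun _ => abs_nonneg _
  set c : ℝ → (Fin (K + 1) → ℝ) × ℝ := fun x => (fun l => x ^ (l : ℕ), F x)
  have hc : ContinuousOn c (Icc (-M) M) :=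
    (continuousOn_pi.2 fun l => (continuous_pow _).continuousOn).prodMk hF
  have hv : ((0 : Fin (K + 1) → ℝ), 2 * δ) ∈
      convexHull ℝ (c '' Icc (-M) M - c '' Icc (-M) M) := by
    refine mk_zero_mem_convexHull_sub_of_forall_exists_le
      (isCompact_Icc.image_of_continuousOn hc) (by positivity) fun ℓ => ?_
    obtain ⟨P, hP, hPℓ⟩ := exists_natDegree_le_eval_eq (ℓ : (Fin (K + 1) → ℝ) →ₗ[ℝ] ℝ)
    obtain ⟨x, hx, y, hy, hxy⟩ := exists_two_mul_le_sub_of_forall_le_iSup_abs_sub isCompact_Icc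
      (nonempty_Icc.2 (by linarith)) (hF.sub P.continuous.continuousOn) fun a => by
        simpa [sub_sub] using hδ_le (P + C a) (natDegree_add_C.trans_le hP)
    exact ⟨c x, mem_image_of_mem c hx, c y, mem_image_of_mem c hy, by simpa [c, hPℓ] using hxy⟩
  obtain ⟨ν₀, ν₁, h₀, h₁, hs₀, hs₁, hℓ⟩ := exists_isProbabilityMeasure_of_mem_convexHull_sub hv
  refine ⟨ν₀, ν₁, h₀, h₁, hs₀, hs₁, fun l hl => ?_, ?_⟩
  · refine sub_eq_zero.1 ?_
    simpa [c] using hℓ ((LinearMap.proj (⟨l, by omega⟩ : Fin (K + 1))).comp (LinearMap.fst ..))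
  · simpa [c] using hℓ (LinearMap.snd ..)

/-- If `F` is continuous on `[-M, M]`, `K ≥ 1` and the best uniform polynomial
approximation error `δ = δ_{K,M}` is positive, then there exist probability measures
`ν₀, ν₁` supported in `[-M, M]` with matching moments up to order `K` and
`∫ F dν₀ - ∫ F dν₁ = 2δ`. -/
theorem exists_measures_matching_moments
    (F : ℝ → ℝ) (M : ℝ) (hM : 0 < M) (K : ℕ) (hK : 1 ≤ K)
    (hF : ContinuousOn F (Icc (-M) M)) (δ : ℝ)
    (hδ : δ = sInf {e : ℝ | ∃ P : Polynomial ℝ, P.natDegree ≤ K ∧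
        e = ⨆ x : Icc (-M) M, |F (x : ℝ) - P.eval (x : ℝ)|})
    (hδpos : 0 < δ) :
    ∃ ν₀ ν₁ : Measure ℝ, IsProbabilityMeasure ν₀ ∧ IsProbabilityMeasure ν₁ ∧
      ν₀ (Icc (-M) M)ᶜ = 0 ∧ ν₁ (Icc (-M) M)ᶜ = 0 ∧
      (∀ l : ℕ, l ≤ K → ∫ t, t ^ l ∂ν₀ = ∫ t, t ^ l ∂ν₁) ∧
      (∫ t, F t ∂ν₀) - (∫ t, F t ∂ν₁) = 2 * δ :=
  exists_measures_matching_moments_general F M hM K hF δ hδ hδpos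
end

section
/- Let ν₀ and ν₁ be probability measures supported on [-M, M] whose moments of orders 0 through K coincide, and let φ be the standard Gaussian density. Define φ_i(x) = ∫ φ(x - t) dν_i(t). Then ∫_ℝ (φ₁(x) - φ₀(x))^2 / φ(x) dx ≤ 4 Σ_{k ≥ K+1} M^{2k} / k!. -/
open MeasureTheory Set ProbabilityTheory Real

/-!
With `φ` the standard Gaussian density, `φ(x - s) φ(x - t) / φ(x) = e^{st} φ(x - s - t)`, so by
Fubini `∫ φ_μ φ_ν / φ = ∫∫ e^{st} dμ(s) dν(t) = ∑ₖ mₖ(μ) mₖ(ν) / k!`, where `mₖ` are the moments.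
Expanding the square, `∫ (φ₁ - φ₀)² / φ = ∑ₖ (mₖ(ν₁) - mₖ(ν₀))² / k!`: the terms with `k ≤ K`
vanish by moment matching and the others are at most `(2 M^k)² / k!`.
-/

lemma gaussianPDFReal_zero_one_apply (x : ℝ) :
    gaussianPDFReal 0 1 x = (2 * π) ^ (-(1 : ℝ) / 2) * exp (-x ^ 2 / 2) := by
  rw [gaussianPDFReal, sqrt_eq_rpow, ← rpow_neg (by positivity)]
  norm_num

lemma gaussianPDFReal_mul_gaussianPDFReal_div (x s t : ℝ) :
    gaussianPDFReal 0 1 (x - s) * gaussianPDFReal 0 1 (x - t) / gaussianPDFReal 0 1 x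
      = exp (s * t) * gaussianPDFReal 0 1 (x - (s + t)) := by
  have hexp : exp (-(x - s) ^ 2 / 2) * exp (-(x - t) ^ 2 / 2)
      = exp (s * t) * exp (-(x - (s + t)) ^ 2 / 2) * exp (-x ^ 2 / 2) := by
    simp only [← exp_add]; ring_nf
  rw [div_eq_iff (gaussianPDFReal_pos _ _ _ one_ne_zero).ne']
  simp only [gaussianPDFReal_zero_one_apply]
  linear_combination ((2 * π) ^ (-(1 : ℝ) / 2)) ^ 2 * hexp

lemma integral_gaussianPDFReal_sub (a : ℝ) : ∫ x, gaussianPDFReal 0 1 (x - a) = 1 := by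
  simp_rw [gaussianPDFReal_sub, integral_gaussianPDFReal_eq_one _ one_ne_zero]

lemma integrable_gaussianPDFReal_sub (a : ℝ) :
    Integrable (fun x ↦ gaussianPDFReal 0 1 (x - a)) := by
  simp_rw [gaussianPDFReal_sub]; exact integrable_gaussianPDFReal _ _

noncomputable def gaussianMixture (μ : Measure ℝ) (x : ℝ) : ℝ :=
  ∫ t, gaussianPDFReal 0 1 (x - t) ∂μ

section GaussianMixture

-- Scoped so that `Nat`'s notation `φ` (totient) does not capture the binder `φ` below.
open scoped Nat

variable {M : ℝ} {μ ν : Measure ℝ}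

lemma ae_abs_mul_le_sq (hμ : ∀ᵐ t ∂μ, |t| ≤ M) (hν : ∀ᵐ t ∂ν, |t| ≤ M) :
    ∀ᵐ p ∂μ.prod ν, |p.1 * p.2| ≤ M ^ 2 := by
  filter_upwards [Measure.quasiMeasurePreserving_fst.ae hμ,
    Measure.quasiMeasurePreserving_snd.ae hν] with p h₁ h₂
  rw [abs_mul, sq]
  exact mul_le_mul h₁ h₂ (abs_nonneg _) ((abs_nonneg _).trans h₁)

lemma integrable_exp_mul_gaussianPDFReal_sub_add [IsFiniteMeasure μ] [IsFiniteMeasure ν]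
    (hμ : ∀ᵐ t ∂μ, |t| ≤ M) (hν : ∀ᵐ t ∂ν, |t| ≤ M) :
    Integrable (fun q : ℝ × ℝ × ℝ ↦
      exp (q.2.1 * q.2.2) * gaussianPDFReal 0 1 (q.1 - (q.2.1 + q.2.2)))
      (volume.prod (μ.prod ν)) := by
  refine (integrable_prod_iff' (by fun_prop)).2 ⟨.of_forall fun p ↦
    (integrable_gaussianPDFReal_sub (p.1 + p.2)).const_mul (exp (p.1 * p.2)), ?_⟩
  have hinner (p : ℝ × ℝ) :
      ∫ x, ‖exp (p.1 * p.2) * gaussianPDFReal 0 1 (x - (p.1 + p.2))‖ = exp (p.1 * p.2) := by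
    simp_rw [norm_mul, norm_of_nonneg (exp_pos _).le,
      norm_of_nonneg (gaussianPDFReal_nonneg _ _ _)]
    rw [integral_const_mul, integral_gaussianPDFReal_sub, mul_one]
  simp_rw [hinner]
  refine .of_bound (by fun_prop) (exp (M ^ 2)) ?_
  filter_upwards [ae_abs_mul_le_sq hμ hν] with p hp
  rw [norm_of_nonneg (exp_pos _).le]
  exact exp_le_exp.2 ((le_abs_self _).trans hp)

lemma gaussianMixture_mul_div_eq_integral [SFinite μ] [SFinite ν] (x : ℝ) :
    gaussianMixture μ x * gaussianMixture ν x / gaussianPDFReal 0 1 x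
      = ∫ p, exp (p.1 * p.2) * gaussianPDFReal 0 1 (x - (p.1 + p.2)) ∂μ.prod ν := by
  simp_rw [← gaussianPDFReal_mul_gaussianPDFReal_div, integral_div]
  rw [gaussianMixture, gaussianMixture,
    integral_prod_mul (fun t ↦ gaussianPDFReal 0 1 (x - t)) (fun t ↦ gaussianPDFReal 0 1 (x - t))]

lemma integrable_gaussianMixture_mul_div [IsFiniteMeasure μ] [IsFiniteMeasure ν]
    (hμ : ∀ᵐ t ∂μ, |t| ≤ M) (hν : ∀ᵐ t ∂ν, |t| ≤ M) :
    Integrable (fun x ↦ gaussianMixture μ x * gaussianMixture ν x / gaussianPDFReal 0 1 x) := by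
  simp_rw [gaussianMixture_mul_div_eq_integral]
  exact (integrable_exp_mul_gaussianPDFReal_sub_add hμ hν).integral_prod_left

lemma integral_gaussianMixture_mul_div [IsFiniteMeasure μ] [IsFiniteMeasure ν]
    (hμ : ∀ᵐ t ∂μ, |t| ≤ M) (hν : ∀ᵐ t ∂ν, |t| ≤ M) :
    ∫ x, gaussianMixture μ x * gaussianMixture ν x / gaussianPDFReal 0 1 x
      = ∫ p, exp (p.1 * p.2) ∂μ.prod ν := by
  simp_rw [gaussianMixture_mul_div_eq_integral]
  rw [integral_integral_swap (integrable_exp_mul_gaussianPDFReal_sub_add hμ hν)]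
  simp_rw [integral_const_mul, integral_gaussianPDFReal_sub, mul_one]

lemma hasSum_integral_exp_mul [IsFiniteMeasure μ] [IsFiniteMeasure ν]
    (hμ : ∀ᵐ t ∂μ, |t| ≤ M) (hν : ∀ᵐ t ∂ν, |t| ≤ M) :
    HasSum (fun k : ℕ ↦ (∫ t, t ^ k ∂μ) * (∫ t, t ^ k ∂ν) / k !)
      (∫ p, exp (p.1 * p.2) ∂μ.prod ν) := by
  set F : ℕ → ℝ × ℝ → ℝ := fun k p ↦ (p.1 * p.2) ^ k / (k ! : ℝ)
  have hF_le (k : ℕ) : ∀ᵐ p ∂μ.prod ν, ‖F k p‖ ≤ (M ^ 2) ^ k / k ! := by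
    filter_upwards [ae_abs_mul_le_sq hμ hν] with p hp
    rw [norm_div, norm_pow, Real.norm_natCast, Real.norm_eq_abs]
    gcongr
  have hF_int (k : ℕ) : Integrable (F k) (μ.prod ν) := .of_bound (by fun_prop) _ (hF_le k)
  have hF_sum : Summable fun k ↦ ∫ p, ‖F k p‖ ∂μ.prod ν := by
    refine ((summable_pow_div_factorial (M ^ 2)).mul_right ((μ.prod ν).real univ)).of_norm_bounded
      fun k ↦ norm_integral_le_of_norm_le_const ?_
    filter_upwards [hF_le k] with p hp
    rwa [norm_norm]
  have hF_integral (k : ℕ) : ∫ p, F k p ∂μ.prod ν = (∫ t, t ^ k ∂μ) * (∫ t, t ^ k ∂ν) / k ! := by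
    simp only [F, mul_pow, integral_div]
    rw [integral_prod_mul (fun t ↦ t ^ k) (fun t ↦ t ^ k)]
  have hF_tsum (p : ℝ × ℝ) : ∑' k, F k p = exp (p.1 * p.2) := by
    rw [exp_eq_exp_ℝ, NormedSpace.exp_eq_tsum_div]
  simpa only [hF_integral, hF_tsum] using hasSum_integral_of_summable_integral_norm hF_int hF_sum

lemma hasSum_integral_gaussianMixture_mul_div [IsFiniteMeasure μ] [IsFiniteMeasure ν]
    (hμ : ∀ᵐ t ∂μ, |t| ≤ M) (hν : ∀ᵐ t ∂ν, |t| ≤ M) :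
    HasSum (fun k : ℕ ↦ (∫ t, t ^ k ∂μ) * (∫ t, t ^ k ∂ν) / k !)
      (∫ x, gaussianMixture μ x * gaussianMixture ν x / gaussianPDFReal 0 1 x) :=
  integral_gaussianMixture_mul_div hμ hν ▸ hasSum_integral_exp_mul hμ hν

lemma hasSum_integral_sq_gaussianMixture_sub_div [IsFiniteMeasure μ] [IsFiniteMeasure ν]
    (hμ : ∀ᵐ t ∂μ, |t| ≤ M) (hν : ∀ᵐ t ∂ν, |t| ≤ M) :
    HasSum (fun k : ℕ ↦ ((∫ t, t ^ k ∂μ) - ∫ t, t ^ k ∂ν) ^ 2 / k !)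
      (∫ x, (gaussianMixture μ x - gaussianMixture ν x) ^ 2 / gaussianPDFReal 0 1 x) := by
  have hexpand : (fun x ↦ (gaussianMixture μ x - gaussianMixture ν x) ^ 2 / gaussianPDFReal 0 1 x)
      = fun x ↦ gaussianMixture μ x * gaussianMixture μ x / gaussianPDFReal 0 1 x
        - 2 * (gaussianMixture μ x * gaussianMixture ν x / gaussianPDFReal 0 1 x)
        + gaussianMixture ν x * gaussianMixture ν x / gaussianPDFReal 0 1 x := by
    ext x; ring
  have hsq : (fun k : ℕ ↦ ((∫ t, t ^ k ∂μ) - ∫ t, t ^ k ∂ν) ^ 2 / k !)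
      = fun k : ℕ ↦ (∫ t, t ^ k ∂μ) * (∫ t, t ^ k ∂μ) / (k ! : ℝ)
        - 2 * ((∫ t, t ^ k ∂μ) * (∫ t, t ^ k ∂ν) / k !)
        + (∫ t, t ^ k ∂ν) * (∫ t, t ^ k ∂ν) / k ! := by
    ext k; ring
  have hμμ := integrable_gaussianMixture_mul_div hμ hμ
  have hμν := (integrable_gaussianMixture_mul_div hμ hν).const_mul 2
  rw [hexpand, hsq, integral_add (by exact hμμ.sub hμν) (integrable_gaussianMixture_mul_div hν hν),
    integral_sub hμμ hμν, integral_const_mul]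
  exact ((hasSum_integral_gaussianMixture_mul_div hμ hμ).sub
    ((hasSum_integral_gaussianMixture_mul_div hμ hν).mul_left 2)).add
    (hasSum_integral_gaussianMixture_mul_div hν hν)

lemma abs_integral_pow_le [IsProbabilityMeasure μ] (hμ : ∀ᵐ t ∂μ, |t| ≤ M) (k : ℕ) :
    |∫ t, t ^ k ∂μ| ≤ M ^ k := by
  simpa using norm_integral_le_of_norm_le_const (μ := μ) (f := fun t ↦ t ^ k)
    (hμ.mono fun t ht ↦ by rw [norm_pow]; exact pow_le_pow_left₀ (abs_nonneg t) ht k)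

end GaussianMixture

lemma HasSum.le_tsum_subtype {ι : Type*} {f g : ι → ℝ} {a : ℝ} {s : Set ι} (hf : HasSum f a)
    (hg : Summable g) (hf_zero : ∀ i ∉ s, f i = 0) (hfg : ∀ i ∈ s, f i ≤ g i) :
    a ≤ ∑' i : s, g i := by
  rw [← hf.tsum_eq, ← tsum_subtype_eq_of_support_subset (s := s)
    fun i hi ↦ by_contra fun h ↦ hi (hf_zero i h)]
  exact (hf.summable.subtype s).tsum_le_tsum (fun i ↦ hfg i i.2) (hg.subtype s)

theorem chi_sq_bound_moment_matching_general
    (M : ℝ) (K : ℕ) (ν₀ ν₁ : Measure ℝ)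
    [IsProbabilityMeasure ν₀] [IsProbabilityMeasure ν₁]
    (hs₀ : ν₀ (Icc (-M) M)ᶜ = 0) (hs₁ : ν₁ (Icc (-M) M)ᶜ = 0)
    (hmom : ∀ l : ℕ, l ≤ K → ∫ t, t ^ l ∂ν₀ = ∫ t, t ^ l ∂ν₁)
    (φ : ℝ → ℝ) (hφ : φ = fun x => (2 * Real.pi) ^ (-(1:ℝ)/2) * Real.exp (-x ^ 2 / 2))
    (φ₀ φ₁ : ℝ → ℝ)
    (hφ₀ : φ₀ = fun x => ∫ t, φ (x - t) ∂ν₀)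
    (hφ₁ : φ₁ = fun x => ∫ t, φ (x - t) ∂ν₁) :
    ∫ x, (φ₁ x - φ₀ x) ^ 2 / φ x
      ≤ 4 * ∑' k : {k : ℕ // K + 1 ≤ k}, M ^ (2 * (k : ℕ)) / (Nat.factorial k : ℝ) := by
  obtain rfl : φ = gaussianPDFReal 0 1 :=
    hφ ▸ funext fun x ↦ (gaussianPDFReal_zero_one_apply x).symm
  subst hφ₀ hφ₁
  have h₀ : ∀ᵐ t ∂ν₀, |t| ≤ M := Filter.mem_of_superset (mem_ae_iff.2 hs₀) fun _ ↦ abs_le.2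
  have h₁ : ∀ᵐ t ∂ν₁, |t| ≤ M := Filter.mem_of_superset (mem_ae_iff.2 hs₁) fun _ ↦ abs_le.2
  have hsummable : Summable fun k : ℕ ↦ 4 * (M ^ (2 * k) / (Nat.factorial k : ℝ)) := by
    simpa only [pow_mul] using (summable_pow_div_factorial (M ^ 2)).mul_left 4
  rw [← tsum_mul_left]
  refine (hasSum_integral_sq_gaussianMixture_sub_div h₁ h₀).le_tsum_subtype hsummable
    (fun k hk ↦ ?_) (fun k _ ↦ ?_)
  · rw [hmom k (Nat.le_of_lt_succ (not_le.1 hk)), sub_self, sq, zero_mul, zero_div]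
  · have ha := abs_le.1 (abs_integral_pow_le h₁ k)
    have hb := abs_le.1 (abs_integral_pow_le h₀ k)
    rw [mul_div_assoc', pow_mul']
    gcongr
    nlinarith

/-- If `ν₀, ν₁` are probability measures supported in `[-M, M]` whose moments up to
order `K` coincide, and `φ` is the standard Gaussian density, then with
`φᵢ(x) = ∫ φ(x - t) dνᵢ(t)` we have
`∫ (φ₁ - φ₀)^2 / φ ≤ 4 * ∑_{k ≥ K+1} M^(2k) / k!`. -/
theorem chi_sq_bound_moment_matching
    (M : ℝ) (hM : 0 < M) (K : ℕ) (ν₀ ν₁ : Measure ℝ)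
    [IsProbabilityMeasure ν₀] [IsProbabilityMeasure ν₁]
    (hs₀ : ν₀ (Icc (-M) M)ᶜ = 0) (hs₁ : ν₁ (Icc (-M) M)ᶜ = 0)
    (hmom : ∀ l : ℕ, l ≤ K → ∫ t, t ^ l ∂ν₀ = ∫ t, t ^ l ∂ν₁)
    (φ : ℝ → ℝ) (hφ : φ = fun x => (2 * Real.pi) ^ (-(1:ℝ)/2) * Real.exp (-x ^ 2 / 2))
    (φ₀ φ₁ : ℝ → ℝ)
    (hφ₀ : φ₀ = fun x => ∫ t, φ (x - t) ∂ν₀)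
    (hφ₁ : φ₁ = fun x => ∫ t, φ (x - t) ∂ν₁) :
    ∫ x, (φ₁ x - φ₀ x) ^ 2 / φ x
      ≤ 4 * ∑' k : {k : ℕ // K + 1 ≤ k}, M ^ (2 * (k : ℕ)) / (Nat.factorial k : ℝ) :=
  chi_sq_bound_moment_matching_general M K ν₀ ν₁ hs₀ hs₁ hmom φ hφ φ₀ φ₁ hφ₀ hφ₁
end
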